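/- arXiv:2405.18032 — 5 statements merged into one kernel-verified Lean document; each statement's English description precedes it below -/
import Mathlib

section
/- Let f : A* → A* be a Parikh-collinear morphism (i.e., the Parikh vectors Ψ(f(b)), b ∈ A, are pairwise collinear) and let a ∈ A be an immortal letter (f^n(a) ≠ ε for all n). Then Ψ(f(a)) is an eigenvector of the adjacency matrix M_f associated with the eigenvalue k = Σ_{b∈A} |f(b)|_b. -/
open scoped BigOperators

section Preamble

variable {A B : Type*}

/-- Extension of a morphism (a map on letters) to finite words. -/
def mapWord (f : A → List B) (w : List A) : List B := w.flatMap f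

/-- `iterWord f n w` is the `n`-th iterate `f^n(w)` of the morphism applied to a word. -/
def iterWord (f : A → List A) : ℕ → List A → List A
  | 0, w => w
  | n + 1, w => mapWord f (iterWord f n w)

/-- A morphism is Parikh-collinear if the Parikh vectors of images of letters are
pairwise ℤ-linearly dependent (collinear). -/
def ParikhCollinear [DecidableEq A] (f : A → List A) : Prop :=
  ∀ b c : A, ∃ p q : ℤ, ¬(p = 0 ∧ q = 0) ∧
    ∀ d : A, p * ((f b).count d : ℤ) = q * ((f c).count d : ℤ)

/-- `f` is prolongable on `a`: `f(a) = a·u` with `u` nonempty and `f^n(u) ≠ ε` for all `n`. -/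
def Prolongable (f : A → List A) (a : A) : Prop :=
  ∃ u, f a = a :: u ∧ u ≠ [] ∧ ∀ n, iterWord f n u ≠ []

/-- The length-`n` prefix of an infinite word. -/
def wordTake (x : ℕ → A) (n : ℕ) : List A := (List.range n).map x

/-- `x` is the infinite fixed point `f^ω(a)`: every `f^n(a)` is a prefix of `x`. -/
def IsFixedPointWord (f : A → List A) (a : A) (x : ℕ → A) : Prop :=
  ∀ n, wordTake x (iterWord f n [a]).length = iterWord f n [a]

/-- `y = f(x)` for infinite words: image of every prefix of `x` is a prefix of `y`. -/
def IsMorphicImage (f : A → List B) (x : ℕ → A) (y : ℕ → B) : Prop :=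
  ∀ n, wordTake y (mapWord f (wordTake x n)).length = mapWord f (wordTake x n)

/-- `u` occurs in `x` at position `i`. -/
def FactorAt (x : ℕ → A) (u : List A) (i : ℕ) : Prop :=
  (List.range u.length).map (fun j => x (i + j)) = u

/-- `u` is a factor of the infinite word `x`. -/
def IsFactor (x : ℕ → A) (u : List A) : Prop := ∃ i, FactorAt x u i

/-- `u` occurs in the finite word `w` at position `i`. -/
def OccAt (u w : List A) (i : ℕ) : Prop :=
  i + u.length ≤ w.length ∧ ((w.drop i).take u.length) = u

/-- `w` is a return word to `u` in `x`: `wu` is a factor of `x` containing exactly two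
occurrences of `u`, as a prefix and as a suffix. -/
def IsReturnWord (x : ℕ → A) (u w : List A) : Prop :=
  w ≠ [] ∧ IsFactor x (w ++ u) ∧ {i | OccAt u (w ++ u) i} = {0, w.length}

/-- `x` is `K`-linearly recurrent. -/
def LinRec (K : ℕ) (x : ℕ → A) : Prop :=
  ∀ u w : List A, IsFactor x u → IsReturnWord x u w → w.length ≤ K * u.length

/-- `x` is `K`-linearly recurrent, rational constant. -/
def LinRecQ (K : ℚ) (x : ℕ → A) : Prop :=
  ∀ u w : List A, IsFactor x u → IsReturnWord x u w → (w.length : ℚ) ≤ K * u.length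

/-- `x` is ultimately periodic. -/
def UltPeriodic (x : ℕ → A) : Prop :=
  ∃ p, 1 ≤ p ∧ ∃ i, ∀ n, i ≤ n → x (n + p) = x n

/-- `u ∈ Fac(f)`: `u` is a factor of some `f^n(b)`. -/
def FacOf (f : A → List A) (u : List A) : Prop :=
  ∃ n b, u <:+: iterWord f n [b]

/-- The length-`n` factor of a biinfinite word starting at position `i`. -/
def biTake (z : ℤ → A) (i : ℤ) (n : ℕ) : List A :=
  (List.range n).map (fun j => z (i + j))

/-- `z` belongs to the substitution shift `X(f)`. -/
def InShift (f : A → List A) (z : ℤ → A) : Prop :=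
  ∀ (i : ℤ) (n : ℕ), FacOf f (biTake z i n)

/-- A biinfinite word is (shift-)periodic. -/
def BiPeriodic (z : ℤ → A) : Prop :=
  ∃ p : ℤ, 1 ≤ p ∧ ∀ i, z (i + p) = z i

/-- `u` is a factor of the biinfinite word `z`. -/
def BiFactor (z : ℤ → A) (u : List A) : Prop :=
  ∃ i, biTake z i u.length = u

/-- `u` belongs to the language of the shift `X(f)`. -/
def ShiftFactor (f : A → List A) (u : List A) : Prop :=
  ∃ z, InShift f z ∧ BiFactor z u

/-- `w` is a return word to `u` in the shift `X(f)`. -/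
def ShiftReturnWord (f : A → List A) (u w : List A) : Prop :=
  w ≠ [] ∧ ShiftFactor f (w ++ u) ∧ {i | OccAt u (w ++ u) i} = {0, w.length}

/-- `X(f)` is minimal: every factor of the shift occurs in every element. -/
def ShiftMinimal (f : A → List A) : Prop :=
  ∀ z, InShift f z → ∀ u, ShiftFactor f u → BiFactor z u

/-- The cutting set `CS_{f,a} = {|f(pref_m(x))| : m ≥ 0}` of the fixed point `x`. -/
def cutSet (f : A → List A) (x : ℕ → A) : Set ℕ :=
  {n | ∃ m, n = (mapWord f (wordTake x m)).length}

end Preamble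

/-- For a Parikh-collinear morphism `f` and an immortal letter `a`,
the Parikh vector `Ψ(f(a))` is an eigenvector of the adjacency matrix `M_f`
associated with the eigenvalue `k = Σ_{b∈A} |f(b)|_b`. -/
theorem stmt_0 {A : Type*} [Fintype A] [DecidableEq A] (f : A → List A)
    (hf : ParikhCollinear f) (a : A) (ha : ∀ n, iterWord f n [a] ≠ []) :
    (fun b => ((f a).count b : ℚ)) ≠ 0 ∧
    (Matrix.of fun b c => ((f c).count b : ℚ)).mulVec (fun b => ((f a).count b : ℚ)) =
      (∑ b : A, ((f b).count b : ℚ)) • (fun b => ((f a).count b : ℚ)) := by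
  have hfa : f a ≠ [] := by
    have h1 := ha 1
    simpa [iterWord, mapWord] using h1
  have hlam : ∀ c : A, ∃ l : ℚ, ∀ d, ((f c).count d : ℚ) = l * ((f a).count d : ℚ) := by
    intro c
    obtain ⟨p, q, hpq, h⟩ := hf c a
    have hp : p ≠ 0 := by
      rintro rfl
      have hq : q ≠ 0 := fun hq => hpq ⟨rfl, hq⟩
      apply hfa
      rw [List.eq_nil_iff_forall_not_mem]
      intro d hd
      have hcd : (f a).count d = 0 := by
        have := h d
        simp only [zero_mul] at this
        have := this.symm
        rcases mul_eq_zero.mp this with h' | h'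
        · exact absurd h' hq
        · exact_mod_cast h'
      exact (List.count_eq_zero.mp hcd) hd
    refine ⟨(q : ℚ) / p, fun d => ?_⟩
    have hd := h d
    have hpQ : (p : ℚ) ≠ 0 := Int.cast_ne_zero.mpr hp
    have : (p : ℚ) * ((f c).count d : ℚ) = (q : ℚ) * ((f a).count d : ℚ) := by
      exact_mod_cast hd
    field_simp
    linarith
  choose l hl using hlam
  constructor
  · intro h0
    apply hfa
    rw [List.eq_nil_iff_forall_not_mem]
    intro d hd
    have := congrFun h0 d
    simp only [Pi.zero_apply, Nat.cast_eq_zero] at this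
    exact (List.count_eq_zero.mp this) hd
  · funext b
    have key : (∑ c : A, ((f c).count b : ℚ) * ((f a).count c : ℚ))
        = (∑ c : A, ((f c).count c : ℚ)) * ((f a).count b : ℚ) := by
      calc (∑ c : A, ((f c).count b : ℚ) * ((f a).count c : ℚ))
          = ∑ c : A, l c * ((f a).count b : ℚ) * ((f a).count c : ℚ) :=
            Finset.sum_congr rfl fun c _ => by rw [hl c b]
        _ = (∑ c : A, l c * ((f a).count c : ℚ)) * ((f a).count b : ℚ) := by
            rw [Finset.sum_mul]; exact Finset.sum_congr rfl fun c _ => by ring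
        _ = (∑ c : A, ((f c).count c : ℚ)) * ((f a).count b : ℚ) := by
            congr 1
            exact Finset.sum_congr rfl fun c _ => (hl c c).symm
    simpa [Matrix.mulVec, dotProduct, mul_comm] using key
end

section
/- Let f : A* → A* be a Parikh-collinear morphism prolongable on a ∈ A, let B be the set of letters b with f^n(b) ≠ ε for all n, let κ : A* → B* erase all letters not in B and keep letters of B fixed, and define g : B* → B* by g(b) = κ(f(b)). Then g is a non-erasing Parikh-collinear morphism prolongable on a, and f(g^ω(a)) = f^ω(a). -/
open scoped BigOperators

section AuxLemmas

variable {A : Type*}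

lemma mapWord_nil' (f : A → List A) : mapWord f [] = [] := rfl

lemma mapWord_cons' (f : A → List A) (c : A) (w : List A) :
    mapWord f (c :: w) = f c ++ mapWord f w := by simp [mapWord]

lemma mapWord_singleton' (f : A → List A) (c : A) : mapWord f [c] = f c := by
  simp [mapWord]

lemma mapWord_append' (f : A → List A) (u v : List A) :
    mapWord f (u ++ v) = mapWord f u ++ mapWord f v := by simp [mapWord]

lemma iterWord_append' (f : A → List A) (n : ℕ) (u v : List A) :
    iterWord f n (u ++ v) = iterWord f n u ++ iterWord f n v := by
  induction n with
  | zero => rfl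
  | succ n ih => simp [iterWord, ih, mapWord_append']

lemma iterWord_succ'' (f : A → List A) (n : ℕ) (w : List A) :
    iterWord f (n + 1) w = iterWord f n (mapWord f w) := by
  induction n with
  | zero => rfl
  | succ n ih => show mapWord f (iterWord f (n+1) w) = _; rw [ih]; rfl

lemma iterWord_ne_nil_of_mem' (f : A → List A) {c : A} {w : List A} (hc : c ∈ w)
    (h : ∀ n, iterWord f n [c] ≠ []) (n : ℕ) : iterWord f n w ≠ [] := by
  obtain ⟨s, t, rfl⟩ := List.append_of_mem hc
  intro heq
  rw [show s ++ c :: t = s ++ [c] ++ t by simp, iterWord_append', iterWord_append'] at heq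
  simp only [List.append_eq_nil_iff] at heq
  exact h n heq.1.2

end AuxLemmas

/-- Let `f` be Parikh-collinear and prolongable on `a`, `B` the set of
immortal letters, `κ` the morphism erasing all letters outside `B`, and `g = κ ∘ f`.
Then `g` maps `B` into `B*`, is non-erasing on `B`, Parikh-collinear (on `B`),
prolongable on `a`, and `f(g^ω(a)) = f^ω(a)`. -/
theorem stmt_4 {A : Type*} [DecidableEq A] (f g : A → List A) (a : A)
    (hf : ParikhCollinear f) (ha : Prolongable f a)
    (p : A → Bool) (hp : ∀ c, p c = true ↔ ∀ n, iterWord f n [c] ≠ [])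
    (hg : ∀ b, g b = (f b).filter p) :
    (∀ b c : A, c ∈ g b → ∀ n, iterWord f n [c] ≠ []) ∧
    (∀ b : A, (∀ n, iterWord f n [b] ≠ []) → g b ≠ []) ∧
    (∀ b c : A, (∀ n, iterWord f n [b] ≠ []) → (∀ n, iterWord f n [c] ≠ []) →
      ∃ s t : ℤ, ¬(s = 0 ∧ t = 0) ∧
        ∀ d : A, s * ((g b).count d : ℤ) = t * ((g c).count d : ℤ)) ∧
    Prolongable g a ∧
    (∀ x y : ℕ → A, IsFixedPointWord g a x → IsMorphicImage f x y →
      IsFixedPointWord f a y) := by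

  classical
  obtain ⟨u, hfa, hune, hun⟩ := ha
  have haimm' : ∀ n, ∃ w, iterWord f n [a] = a :: w := by
    intro n
    induction n with
    | zero => exact ⟨[], rfl⟩
    | succ n ih =>
      obtain ⟨w, hw⟩ := ih
      refine ⟨u ++ mapWord f w, ?_⟩
      show mapWord f (iterWord f n [a]) = _
      rw [hw, mapWord_cons', hfa]
      simp
  have haimm : ∀ n, iterWord f n [a] ≠ [] := fun n => by
    obtain ⟨w, hw⟩ := haimm' n; simp [hw]
  -- dichotomy: letters with nonempty image are immortal
  have hdi : ∀ c, f c ≠ [] → ∀ n, iterWord f n [c] ≠ [] := by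
    intro c hc
    obtain ⟨p', q', h0, hcol⟩ := hf c a
    have hq : q' ≠ 0 := by
      rintro rfl
      have hp' : p' ≠ 0 := fun h => h0 ⟨h, rfl⟩
      apply hc
      refine List.eq_nil_iff_forall_not_mem.mpr fun d hd => ?_
      have h1 := hcol d
      simp only [zero_mul] at h1
      have h2 : ((f c).count d : ℤ) = 0 := by
        rcases mul_eq_zero.mp h1 with h | h
        · exact absurd h hp'
        · exact h
      have h3 : (f c).count d = 0 := by exact_mod_cast h2
      exact List.count_eq_zero.mp h3 hd
    have hmem : a ∈ f c := by
      by_contra hmem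
      have h1 := hcol a
      rw [List.count_eq_zero.mpr hmem] at h1
      have h2 : q' * ((f a).count a : ℤ) = 0 := by rw [← h1]; ring
      rcases mul_eq_zero.mp h2 with h | h
      · exact hq h
      · rw [hfa] at h
        simp only [List.count_cons_self] at h
        omega
    intro n
    cases n with
    | zero => simp [iterWord]
    | succ n =>
      rw [iterWord_succ'', mapWord_singleton']
      exact iterWord_ne_nil_of_mem' f hmem haimm n
  have hpc : ∀ c, p c = false → f c = [] := by
    intro c hcp
    by_contra h
    have h1 := (hp c).mpr (hdi c h)
    rw [hcp] at h1
    exact Bool.false_ne_true h1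
  have part1 : ∀ b c : A, c ∈ g b → ∀ n, iterWord f n [c] ≠ [] := by
    intro b c hc
    rw [hg] at hc
    exact (hp c).mp (List.of_mem_filter hc)
  have part2 : ∀ b : A, (∀ n, iterWord f n [b] ≠ []) → g b ≠ [] := by
    intro b hb hgb
    rw [hg] at hgb
    have hall : ∀ c ∈ f b, f c = [] := by
      intro c hc
      apply hpc
      have h1 := List.filter_eq_nil_iff.mp hgb c hc
      simpa using h1
    apply hb 2
    show mapWord f (iterWord f 1 [b]) = []
    have h1 : iterWord f 1 [b] = f b := mapWord_singleton' f b
    rw [h1]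
    exact List.flatMap_eq_nil_iff.mpr hall
  have part3 : ∀ b c : A, (∀ n, iterWord f n [b] ≠ []) → (∀ n, iterWord f n [c] ≠ []) →
      ∃ s t : ℤ, ¬(s = 0 ∧ t = 0) ∧
        ∀ d : A, s * ((g b).count d : ℤ) = t * ((g c).count d : ℤ) := by
    intro b c _ _
    obtain ⟨s, t, h0, hcol⟩ := hf b c
    refine ⟨s, t, h0, fun d => ?_⟩
    rw [hg, hg]
    by_cases hd : p d = true
    · rw [List.count_filter hd, List.count_filter hd]
      exact hcol d
    · have hz : ∀ w : List A, (w.filter p).count d = 0 := fun w =>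
        List.count_eq_zero.mpr fun hm => hd (List.of_mem_filter hm)
      rw [hz, hz]
      simp
  have hpa : p a = true := (hp a).mpr haimm
  have hga : g a = a :: u.filter p := by
    rw [hg, hfa, List.filter_cons_of_pos hpa]
  have hu' : u.filter p ≠ [] := by
    intro h
    have hall : ∀ c ∈ u, f c = [] := fun c hc =>
      hpc c (by simpa using List.filter_eq_nil_iff.mp h c hc)
    apply hun 1
    show mapWord f (iterWord f 0 u) = []
    show mapWord f u = []
    exact List.flatMap_eq_nil_iff.mpr hall
  have hstep : ∀ (n : ℕ) (w : List A), w ≠ [] → (∀ c ∈ w, p c = true) →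
      iterWord g n w ≠ [] ∧ ∀ c ∈ iterWord g n w, p c = true := by
    intro n
    induction n with
    | zero => intro w h1 h2; exact ⟨h1, h2⟩
    | succ n ih =>
      intro w h1 h2
      obtain ⟨h1', h2'⟩ := ih w h1 h2
      constructor
      · show mapWord g (iterWord g n w) ≠ []
        obtain ⟨c, rest, hw⟩ := List.exists_cons_of_ne_nil h1'
        rw [hw, mapWord_cons']
        have hgc : g c ≠ [] := part2 c ((hp c).mp (h2' c (hw ▸ List.mem_cons_self (a := c) (l := rest))))
        intro heq
        rw [List.append_eq_nil_iff] at heq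
        exact hgc heq.1
      · show ∀ d ∈ mapWord g (iterWord g n w), p d = true
        intro d hd
        simp only [mapWord, List.mem_flatMap] at hd
        obtain ⟨c, _, hdc⟩ := hd
        exact (hp d).mpr (part1 c d hdc)
  have part4 : Prolongable g a :=
    ⟨u.filter p, hga, hu', fun n =>
      (hstep n (u.filter p) hu' (fun c hc => List.of_mem_filter hc)).1⟩
  have hfilter : ∀ w : List A, mapWord f (w.filter p) = mapWord f w := by
    intro w
    induction w with
    | nil => rfl
    | cons c w ih =>
      by_cases hc : p c = true
      · rw [List.filter_cons_of_pos hc, mapWord_cons', mapWord_cons', ih]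
      · rw [List.filter_cons_of_neg hc, mapWord_cons', ih,
          hpc c (by simpa using hc)]
        simp
  have hfg : ∀ w : List A, mapWord f (mapWord g w) = mapWord f (mapWord f w) := by
    intro w
    induction w with
    | nil => rfl
    | cons c w ih =>
      rw [mapWord_cons', mapWord_cons' f, mapWord_append', mapWord_append', ih, hg, hfilter]
  have key : ∀ n, mapWord f (iterWord g n [a]) = iterWord f (n + 1) [a] := by
    intro n
    induction n with
    | zero => simp [iterWord, mapWord_singleton']
    | succ n ih =>
      show mapWord f (mapWord g (iterWord g n [a])) = mapWord f (iterWord f (n + 1) [a])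
      rw [hfg, ih]
  have part5 : ∀ x y : ℕ → A, IsFixedPointWord g a x → IsMorphicImage f x y →
      IsFixedPointWord f a y := by
    intro x y hx hy n
    cases n with
    | succ n =>
      have h1 := hy (iterWord g n [a]).length
      rw [show wordTake x (iterWord g n [a]).length = iterWord g n [a] from hx n,
        key n] at h1
      exact h1
    | zero =>
      have h1 := hy (iterWord g 0 [a]).length
      rw [show wordTake x (iterWord g 0 [a]).length = iterWord g 0 [a] from hx 0] at h1
      have h1' : wordTake y (f a).length = f a := by
        simpa [iterWord, mapWord_singleton'] using h1
      rw [hfa] at h1'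
      have hy0 : y 0 = a := by
        rw [wordTake, List.length_cons, List.range_succ_eq_map, List.map_cons] at h1'
        exact (List.cons_eq_cons.mp h1').1
      show wordTake y 1 = [a]
      simp [wordTake, List.range_succ, hy0]
  exact ⟨part1, part2, part3, part4, part5⟩
end

section
/- The fixed point 𝐱 = f^ω(0) of the morphism f : 0 ↦ 012, 1 ↦ 112002, 2 ↦ ε is not ultimately periodic. -/
open scoped BigOperators

/-- The Parikh-collinear morphism `f : 0 ↦ 012, 1 ↦ 112002, 2 ↦ ε` on `{0,1,2}`. -/
def fEx : Fin 3 → List (Fin 3) := ![[0, 1, 2], [1, 1, 2, 0, 0, 2], []]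

/-- The morphism `κ` erasing the mortal letter `2` and fixing `0` and `1`. -/
def kappaEx : Fin 3 → List (Fin 2) := ![[0], [1], []]

/-- The inclusion `{0,1} ↪ {0,1,2}`. -/
def iotaEx : Fin 2 → Fin 3 := Fin.castLE (by omega)

/-- The morphism `g = κ ∘ f` on `{0,1}`. -/
def gEx : Fin 2 → List (Fin 2) := fun b => mapWord kappaEx (fEx (iotaEx b))

namespace S12

def X (k : ℕ) : List (Fin 3) := iterWord fEx k [0]

inductive Bl : List (Fin 3) → Prop
  | nil : Bl []
  | ca {w} : Bl w → Bl (0::1::2::w)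
  | cb {w} : Bl w → Bl (1::1::2::0::0::2::w)

theorem bl_map {w} (h : Bl w) : Bl (mapWord fEx w) := by
  induction h with
  | nil => simpa [mapWord] using Bl.nil
  | ca _ ih => simp only [mapWord, fEx] at ih ⊢; simpa using Bl.ca (Bl.cb ih)
  | cb _ ih => simp only [mapWord, fEx] at ih ⊢; simpa using Bl.cb (Bl.cb (Bl.ca (Bl.ca ih)))

theorem blX (k : ℕ) : Bl (X (k+1)) := by
  induction k with
  | zero => simpa [X, iterWord, mapWord, fEx] using Bl.ca Bl.nil
  | succ k ih => exact bl_map ih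

theorem bl_len {w} (h : Bl w) : (mapWord fEx w).length = 3 * w.length := by
  induction h with
  | nil => simp [mapWord]
  | ca _ ih => simp only [mapWord, fEx] at ih ⊢; simp at ih ⊢; omega
  | cb _ ih => simp only [mapWord, fEx] at ih ⊢; simp at ih ⊢; omega

theorem lenX (k : ℕ) : (X (k+1)).length = 3^(k+1) := by
  induction k with
  | zero => simp [X, iterWord, mapWord, fEx]
  | succ k ih =>
    have : X (k+2) = mapWord fEx (X (k+1)) := rfl
    rw [this, bl_len (blX k), ih]; ring

theorem P1l {w} (h : Bl w) : ∀ m (hm : m < w.length), (w[m] = 2 ↔ m % 3 = 2) := by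
  induction h with
  | nil => intro m hm; simp at hm
  | @ca v _ ih =>
    intro m hm
    match m with
    | 0 => simp
    | 1 => simp
    | 2 => simp
    | (n+3) =>
      simp only [List.getElem_cons_succ]
      have := ih n (by simpa using hm)
      rw [this]; omega
  | @cb v _ ih =>
    intro m hm
    match m with
    | 0 => simp
    | 1 => simp
    | 2 => simp
    | 3 => simp
    | 4 => simp
    | 5 => simp
    | (n+6) =>
      simp only [List.getElem_cons_succ]
      have := ih n (by simpa using hm)
      rw [this]; omega


/-- position of m-th non-2 letter -/
def e (m : ℕ) : ℕ := 3 * (m/2) + m % 2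

def kp : Fin 3 → List (Fin 3) := ![[0],[1],[]]

theorem kp_ca (v : List (Fin 3)) : mapWord kp (0::1::2::v) = 0::1::(mapWord kp v) := by
  simp [mapWord, kp]

theorem kp_cb (v : List (Fin 3)) :
    mapWord kp (1::1::2::0::0::2::v) = 1::1::0::0::(mapWord kp v) := by
  simp [mapWord, kp]

theorem posk {w} (h : Bl w) : ∀ m (hm : m < (mapWord kp w).length),
    ∃ (h' : e m < w.length), (mapWord kp w)[m] = w[e m] := by
  induction h with
  | nil => intro m hm; simp [mapWord] at hm
  | @ca v _ ih =>
    intro m hm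
    simp only [kp_ca] at hm ⊢
    match m with
    | 0 => exact ⟨by simp [e], by simp [e]⟩
    | 1 => exact ⟨by simp [e], by simp [e]⟩
    | (n+2) =>
      obtain ⟨h', heq⟩ := ih n (by simpa using hm)
      have he : e (n+2) = e n + 3 := by unfold e; omega
      refine ⟨by simp; omega, ?_⟩
      simp only [he, List.getElem_cons_succ]
      simpa using heq
  | @cb v _ ih =>
    intro m hm
    simp only [kp_cb] at hm ⊢
    match m with
    | 0 => exact ⟨by simp [e], by simp [e]⟩
    | 1 => exact ⟨by simp [e], by simp [e]⟩
    | 2 => exact ⟨by simp [e], by simp [e]⟩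
    | 3 => exact ⟨by simp [e], by simp [e]⟩
    | (n+4) =>
      obtain ⟨h', heq⟩ := ih n (by simpa using hm)
      have he : e (n+4) = e n + 6 := by unfold e; omega
      refine ⟨by simp; omega, ?_⟩
      simp only [he, List.getElem_cons_succ]
      simpa using heq

theorem lenk {w} (h : Bl w) : 3 * (mapWord kp w).length = 2 * w.length := by
  induction h with
  | nil => simp [mapWord]
  | @ca v _ ih => rw [kp_ca]; simp at ih ⊢; omega
  | @cb v _ ih => rw [kp_cb]; simp at ih ⊢; omega

theorem bal {w} (h : Bl w) : ∀ n, n ≤ w.length →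
    n ≤ 3 * ((w.take n).count 1) + 4 ∧ 3 * ((w.take n).count 1) ≤ n + 4 := by
  induction h with
  | nil => intro n hn; simp at hn; subst hn; simp
  | @ca v _ ih =>
    intro n hn
    match n with
    | 0 => simp
    | 1 => simp [List.count_cons]
    | 2 => simp [List.count_cons]
    | (n+3) =>
      have := ih n (by simpa using hn)
      have h2 : ((2:Fin 3) == 1) = false := by decide
      have h0 : ((0:Fin 3) == 1) = false := by decide
      have h1 : ((1:Fin 3) == 1) = true := by decide
      simp only [List.take_succ_cons, List.count_cons]
      simp [h2, h0, h1]
      omega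
  | @cb v _ ih =>
    intro n hn
    match n with
    | 0 => simp
    | 1 => simp [List.count_cons]
    | 2 => simp [List.count_cons]
    | 3 => simp [List.count_cons]
    | 4 => simp [List.count_cons]
    | 5 => simp [List.count_cons]
    | (n+6) =>
      have := ih n (by simpa using hn)
      have h2 : ((2:Fin 3) == 1) = false := by decide
      have h0 : ((0:Fin 3) == 1) = false := by decide
      have h1 : ((1:Fin 3) == 1) = true := by decide
      simp only [List.take_succ_cons, List.count_cons]
      simp [h2, h0, h1]
      omega

/-! ## the word y and its machinery -/

def G : Fin 3 → List (Fin 3) := ![[0,1],[1,1,0,0],[]]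

theorem comp (w : List (Fin 3)) :
    mapWord kp (mapWord fEx w) = mapWord G (mapWord kp w) := by
  induction w with
  | nil => simp [mapWord]
  | cons a l ih =>
    have h : mapWord kp (mapWord fEx (a :: l))
        = mapWord kp (fEx a) ++ mapWord kp (mapWord fEx l) := by
      simp [mapWord]
    have h2 : mapWord G (mapWord kp (a :: l))
        = mapWord G (kp a) ++ mapWord G (mapWord kp l) := by
      simp [mapWord]
    rw [h, h2, ih]
    congr 1
    fin_cases a <;> simp [mapWord, fEx, kp, G]

/-- count of 1s in the first n letters of x -/
def cx (x : ℕ → Fin 3) : ℕ → ℕ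
  | 0 => 0
  | n+1 => cx x n + if x n = 1 then 1 else 0

/-- count of 1s in the first m letters of y (where y m = x (e m)) -/
def c1 (x : ℕ → Fin 3) : ℕ → ℕ
  | 0 => 0
  | m+1 => c1 x m + if x (e m) = 1 then 1 else 0

/-- cut points of the decomposition of y into blocks 01 / 1100 -/
def D (x : ℕ → Fin 3) : ℕ → ℕ
  | 0 => 0
  | k+1 => D x k + if x (e k) = 0 then 2 else 4


section
variable {x : ℕ → Fin 3} (hx : IsFixedPointWord fEx 0 x)
include hx

theorem xval {k m : ℕ} (hm : m < (X k).length) : x m = (X k)[m] := by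
  have h := hx k
  unfold IsFixedPointWord wordTake at h
  have hm' : m < ((List.range (X k).length).map x).length := by simpa using hm
  have h1 : x m = ((List.range (X k).length).map x)[m] := by simp
  rw [h1]
  exact List.getElem_of_eq h hm'

omit hx in
theorem n_lt_lenX (n : ℕ) : n < (X (n+1)).length := by
  rw [lenX]
  calc n < 3^n := Nat.lt_pow_self (by norm_num : 1 < 3)
  _ ≤ 3^(n+1) := Nat.pow_le_pow_right (by norm_num) (by omega)

/-- P1: letter 2 exactly at positions ≡ 2 mod 3 -/
theorem P1x (n : ℕ) : x n = 2 ↔ n % 3 = 2 := by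
  have h := n_lt_lenX n
  rw [xval hx h]
  exact P1l (blX n) n h



theorem yne2 (m : ℕ) : x (e m) ≠ 2 := by
  intro h
  have := (P1x hx (e m)).mp h
  unfold e at this; omega

theorem y01 (m : ℕ) : x (e m) = 0 ∨ x (e m) = 1 := by
  have h := yne2 hx m
  have : ∀ a : Fin 3, a ≠ 2 → a = 0 ∨ a = 1 := by decide
  exact this _ h

omit hx in
theorem count_map_range (n : ℕ) : ((List.range n).map x).count 1 = cx x n := by
  induction n with
  | zero => simp [cx]
  | succ n ih => rw [List.range_succ]; simp [cx, List.count_append, ih, List.count_singleton]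

theorem take_X {k n : ℕ} (hn : n ≤ (X k).length) :
    (X k).take n = (List.range n).map x := by
  have h : (List.range (X k).length).map x = X k := hx k
  conv_lhs => rw [← h]
  rw [← List.map_take, List.take_range, Nat.min_eq_left hn]

theorem balx (n : ℕ) : n ≤ 3 * cx x n + 4 ∧ 3 * cx x n ≤ n + 4 := by
  have hn : n ≤ (X (n+1)).length := (n_lt_lenX n).le
  have := bal (blX n) n hn
  rwa [take_X hx hn, count_map_range] at this

theorem c1_eq (m : ℕ) : c1 x m = cx x (e m) := by
  induction m with
  | zero => simp [c1, cx, e]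
  | succ m ih =>
    rcases Nat.even_or_odd m with he | ho
    · have h1 : e (m+1) = e m + 1 := by
        unfold e; obtain ⟨t, ht⟩ := he; omega
      rw [h1]
      show c1 x (m+1) = cx x (e m) + _
      simp [c1, ih]
    · have h1 : e (m+1) = e m + 1 + 1 := by
        unfold e; obtain ⟨t, ht⟩ := ho; omega
      have h2 : x (e m + 1) = 2 := by
        rw [P1x hx]
        unfold e; obtain ⟨t, ht⟩ := ho; omega
      have hcx : cx x (e m + 1 + 1) = cx x (e m + 1) + if x (e m + 1) = 1 then 1 else 0 := rfl
      have hcx2 : cx x (e m + 1) = cx x (e m) + if x (e m) = 1 then 1 else 0 := rfl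
      have hc1 : c1 x (m+1) = c1 x m + if x (e m) = 1 then 1 else 0 := rfl
      rw [h1, hcx, hcx2, hc1, h2, ih]
      simp

theorem baly (m : ℕ) : m ≤ 2 * c1 x m + 3 ∧ 2 * c1 x m ≤ m + 3 := by
  have h := balx hx (e m)
  rw [← c1_eq hx] at h
  have he : e m = 3 * (m/2) + m % 2 := rfl
  omega

/-! ## self-reading -/

def Yl (k : ℕ) : List (Fin 3) := mapWord kp (X k)

theorem yval {j m : ℕ} (hm : m < (Yl (j+1)).length) : (Yl (j+1))[m] = x (e m) := by
  obtain ⟨h', heq⟩ := posk (blX j) m hm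
  show (mapWord kp (X (j+1)))[m]'hm = x (e m)
  exact heq.trans (xval hx h').symm

omit hx in
theorem lenYl (k : ℕ) : (Yl (k+1)).length = 2 * 3^k := by
  have h := lenk (blX k)
  have h2 := lenX k
  have h3 : (3:ℕ)^(k+1) = 3 * 3^k := by ring
  unfold Yl
  omega


def ytk (x : ℕ → Fin 3) (m : ℕ) : List (Fin 3) := (List.range m).map (fun j => x (e j))

omit hx in
theorem ytk_take {a b : ℕ} (h : a ≤ b) : (ytk x b).take a = ytk x a := by
  unfold ytk
  rw [← List.map_take, List.take_range, Nat.min_eq_left h]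

theorem ytake_Yl (k : ℕ) : ytk x ((Yl (k+1)).length) = Yl (k+1) := by
  apply List.ext_getElem
  · simp [ytk]
  · intro i h1 h2
    show ((List.range _).map _)[i] = _
    change i < ((List.range _).map (fun j => x (e j))).length at h1
    simp only [List.getElem_map, List.getElem_range]; exact (yval hx h2).symm

omit hx in
theorem Yl_succ (k : ℕ) : Yl (k+2) = mapWord G (Yl (k+1)) := by
  have : X (k+2) = mapWord fEx (X (k+1)) := rfl
  rw [Yl, this, comp]; rfl

omit hx in
theorem mapG_append (l1 l2 : List (Fin 3)) :
    mapWord G (l1 ++ l2) = mapWord G l1 ++ mapWord G l2 := by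
  simp [mapWord]

theorem lenG (m : ℕ) : (mapWord G (ytk x m)).length = D x m := by
  induction m with
  | zero => simp [ytk, mapWord, D]
  | succ m ih =>
    show (mapWord G ((List.range (m+1)).map (fun j => x (e j)))).length = _
    rw [List.range_succ, List.map_append]
    show (mapWord G (ytk x m ++ [x (e m)])).length = _
    rw [show ∀ (l1 l2 : List (Fin 3)), mapWord G (l1 ++ l2) = mapWord G l1 ++ mapWord G l2
      from fun l1 l2 => by simp [mapWord]]
    rw [List.length_append, ih]
    rcases y01 hx m with h | h <;> rw [D] <;> rw [h] <;> simp [mapWord, G]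

omit hx in
theorem D_mono (k : ℕ) : D x k + 2 ≤ D x (k+1) := by
  rw [D]; split <;> omega

omit hx in
theorem D_even (k : ℕ) : D x k % 2 = 0 := by
  induction k with
  | zero => rfl
  | succ k ih => rw [D]; split <;> omega

omit hx in
theorem D_bounds (k : ℕ) : 2 * k ≤ D x k ∧ D x k ≤ 4 * k := by
  induction k with
  | zero => simp [D]
  | succ k ih => rw [D]; split <;> omega

theorem F3a (m : ℕ) : ytk x (D x m) = mapWord G (ytk x m) := by
  have hm3 : m ≤ 3^m := Nat.le_of_lt (Nat.lt_pow_self (by norm_num : 1 < 3))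
  have hL1 : m ≤ (Yl (m+1)).length := by rw [lenYl]; omega
  have hL2 : D x m ≤ (Yl (m+2)).length := by
    rw [lenYl]
    have := (D_bounds (x := x) m).2
    have h3 : (3:ℕ)^(m+1) = 3 * 3^m := by ring
    omega
  have h1 : ytk x m = (Yl (m+1)).take m := by
    rw [← ytake_Yl hx m, ytk_take hL1]
  have h2 : Yl (m+2) = mapWord G (ytk x m) ++ mapWord G ((Yl (m+1)).drop m) := by
    rw [Yl_succ m, h1, ← mapG_append, List.take_append_drop]
  have h3 : ytk x ((Yl (m+2)).length) = Yl (m+2) := ytake_Yl hx (m+1)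
  have h4 : (ytk x ((Yl (m+2)).length)).take (D x m) = ytk x (D x m) := ytk_take hL2
  rw [← h4, h3, h2]
  rw [List.take_append_of_le_length (by rw [lenG hx])]
  rw [List.take_of_length_le (by rw [lenG hx])]

theorem selfread (k : ℕ) : x (e (D x k)) = x (e k) := by
  have hs := F3a hx (k+1)
  have hs0 := F3a hx k
  have hyt : ytk x (k+1) = ytk x k ++ [x (e k)] := by
    unfold ytk; rw [List.range_succ, List.map_append]; rfl
  have happ : mapWord G (ytk x (k+1)) = mapWord G (ytk x k) ++ G (x (e k)) := by
    rw [hyt]; simp [mapWord]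
  rw [happ, ← hs0] at hs
  -- hs : ytk x (D x (k+1)) = ytk x (D x k) ++ G (x (e k))
  have hlt : D x k < D x (k+1) := by have := D_mono (x := x) k; omega
  have hlen : (ytk x (D x k)).length = D x k := by simp [ytk]
  have hGlen : 0 < (G (x (e k))).length := by
    rcases y01 hx k with h | h <;> rw [h] <;> simp [G]
  have h5 : D x k < (ytk x (D x (k+1))).length := by simp [ytk]; omega
  have lhs_eq : (ytk x (D x (k+1)))[D x k]'h5 = x (e (D x k)) := by
    simp [ytk]
  have rhs_eq : (ytk x (D x k) ++ G (x (e k)))[D x k]'(by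
      rw [List.length_append, hlen]; omega) = x (e k) := by
    rw [List.getElem_append_right (by omega)]
    rcases y01 hx k with h | h <;> simp [hlen, h, G]
  rw [← lhs_eq, ← rhs_eq]
  congr 1

end

theorem D_le_mono {x : ℕ → Fin 3} {a b : ℕ} (h : a ≤ b) : D x a + 2*(b-a) ≤ D x b := by
  induction b with
  | zero => have : a = 0 := by omega
            subst this; omega
  | succ b ih =>
    rcases Nat.lt_or_ge a (b+1) with h1 | h1
    · have := D_mono (x := x) b
      have := ih (by omega)
      omega
    · have : a = b + 1 := by omega
      subst this; omega

theorem main {x : ℕ → Fin 3} (hx : IsFixedPointWord fEx 0 x) : ¬ UltPeriodic x := by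
  classical
  rintro ⟨p, hp1, i, hper⟩
  have he : ∀ n, e n = 3 * (n/2) + n % 2 := fun _ => rfl
  -- 3 divides p
  have h3 : p % 3 = 0 := by
    have hn : x (3*i+2) = 2 := (P1x hx _).mpr (by omega)
    have h1 : x (3*i+2+p) = 2 := (hper (3*i+2) (by omega)).trans hn
    have h2 := (P1x hx (3*i+2+p)).mp h1
    omega
  -- y has an eventual period
  set P : ℕ → Prop := fun r => 1 ≤ r ∧ ∃ j, ∀ m, j ≤ m → x (e (m + r)) = x (e m) with hP
  have hex : ∃ r, P r := by
    refine ⟨2 * (p/3), ⟨by omega, i, fun m hm => ?_⟩⟩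
    have h1 : e (m + 2*(p/3)) = e m + p := by rw [he, he]; omega
    rw [h1]
    exact hper (e m) (by rw [he]; omega)
  set r := Nat.find hex with hr
  obtain ⟨hr1, j, hj⟩ := Nat.find_spec hex
  -- multiples of the period
  have hmult : ∀ t m, j ≤ m → x (e (m + t*r)) = x (e m) := by
    intro t
    induction t with
    | zero => intro m _; simp
    | succ t ih =>
      intro m hm
      have : m + (t+1)*r = (m + t*r) + r := by ring
      rw [this, hj _ (by omega), ih m hm]
  -- the count β of ones per period
  set β := c1 x (j + r) - c1 x j with hβdef
  have c1succ : ∀ n, c1 x (n+1) = c1 x n + if x (e n) = 1 then 1 else 0 := fun n => rfl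
  have c1mono : ∀ a b, a ≤ b → c1 x a ≤ c1 x b := by
    intro a b hab
    induction b with
    | zero => have : a = 0 := by omega
              subst this; omega
    | succ b ih =>
      rcases Nat.lt_or_ge a (b+1) with h1 | h1
      · have := ih (by omega); rw [c1succ]; omega
      · have : a = b + 1 := by omega
        subst this; omega
  have hβ : ∀ a, j ≤ a → c1 x (a + r) = c1 x a + β := by
    intro a ha
    induction a, ha using Nat.le_induction with
    | base => have := c1mono j (j + r) (by omega); omega
    | succ a ha ih =>
      have h1 : c1 x (a + 1 + r) = c1 x (a + r) + if x (e (a + r)) = 1 then 1 else 0 := by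
        rw [show a + 1 + r = (a + r) + 1 by ring, c1succ]
      rw [h1, hj a ha, ih, c1succ]
      ring
  have hkβ : ∀ k, c1 x (j + k*r) = c1 x j + k*β := by
    intro k
    induction k with
    | zero => simp
    | succ k ih =>
      have : j + (k+1)*r = (j + k*r) + r := by ring
      rw [this, hβ _ (by nlinarith [Nat.zero_le (k*r)]), ih]
      ring
  -- balance forces r = 2β
  have hb1 := baly hx (j + 7*r)
  have hb2 := baly hx j
  rw [hkβ 7] at hb1
  have h2β : r = 2*β := by omega
  have hβ1 : 1 ≤ β := by omega
  -- pigeonhole on cut points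
  have hmaps : ∀ k, D x k % r / 2 < β := by
    intro k
    have h1 : D x k % r % 2 = D x k % 2 := Nat.mod_mod_of_dvd _ ⟨β, h2β⟩
    have h2 := D_even (x := x) k
    have h3 : D x k % r < r := Nat.mod_lt _ (by omega)
    omega
  obtain ⟨k1', hk1', k2', hk2', hne, heq⟩ :=
    Finset.exists_ne_map_eq_of_card_lt_of_maps_to
      (s := Finset.Icc j (j + β)) (t := Finset.range β)
      (f := fun k => D x k % r / 2)
      (by rw [Finset.card_range, Nat.card_Icc]; omega)
      (fun k _ => Finset.mem_range.mpr (hmaps k))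
  simp only [Finset.mem_Icc] at hk1' hk2'
  -- order them
  obtain ⟨k1, k2, hk1, hk2, hlt, heq2⟩ :
      ∃ k1 k2, (j ≤ k1 ∧ k1 ≤ j + β) ∧ (j ≤ k2 ∧ k2 ≤ j + β) ∧ k1 < k2 ∧
        D x k1 % r / 2 = D x k2 % r / 2 := by
    rcases Nat.lt_or_ge k1' k2' with h | h
    · exact ⟨k1', k2', hk1', hk2', h, heq⟩
    · exact ⟨k2', k1', hk2', hk1', by omega, heq.symm⟩
  have hres : D x k1 % r = D x k2 % r := by
    have e1 : D x k1 % r % 2 = 0 := by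
      rw [Nat.mod_mod_of_dvd _ ⟨β, h2β⟩]; exact D_even k1
    have e2 : D x k2 % r % 2 = 0 := by
      rw [Nat.mod_mod_of_dvd _ ⟨β, h2β⟩]; exact D_even k2
    omega
  have hD12 : D x k1 < D x k2 := by have := D_le_mono (x := x) hlt.le; omega
  set d := D x k2 - D x k1 with hd
  have hdr : d % r = 0 := Nat.sub_mod_eq_zero_of_mod_eq hres.symm
  have hdt : ∀ n, j ≤ n → x (e (n + d)) = x (e n) := by
    intro n hn
    have : d = (d / r) * r := by
      rw [Nat.div_mul_cancel]; exact Nat.dvd_of_mod_eq_zero hdr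
    rw [this]
    exact hmult _ n hn
  -- propagation
  have key : ∀ m, D x (k2 + m) = D x (k1 + m) + d ∧ x (e (k2 + m)) = x (e (k1 + m)) := by
    intro m
    induction m with
    | zero =>
      simp only [Nat.add_zero]
      refine ⟨by omega, ?_⟩
      have s2 := selfread hx k2
      have s1 := selfread hx k1
      rw [← s2, ← s1]
      have : D x k2 = D x k1 + d := by omega
      rw [this]
      exact hdt (D x k1) (by have := (D_bounds (x := x) k1).1; omega)
    | succ m ih =>
      obtain ⟨ihD, ihy⟩ := ih
      have hDnext : D x (k2 + (m+1)) = D x (k1 + (m+1)) + d := by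
        have e2 : D x (k2 + m + 1) = D x (k2 + m) + if x (e (k2 + m)) = 0 then 2 else 4 := rfl
        have e1 : D x (k1 + m + 1) = D x (k1 + m) + if x (e (k1 + m)) = 0 then 2 else 4 := rfl
        rw [show k2 + (m+1) = k2 + m + 1 by ring, show k1 + (m+1) = k1 + m + 1 by ring,
          e2, e1, ihy, ihD]
        ring
      refine ⟨hDnext, ?_⟩
      have s2 := selfread hx (k2 + (m+1))
      have s1 := selfread hx (k1 + (m+1))
      rw [← s2, ← s1, hDnext]
      exact hdt _ (by have := (D_bounds (x := x) (k1 + (m+1))).1; omega)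
  -- a smaller eventual period
  have hP' : P (k2 - k1) := by
    refine ⟨by omega, k1, fun m hm => ?_⟩
    have := (key (m - k1)).2
    rw [show k2 + (m - k1) = m + (k2 - k1) by omega, show k1 + (m - k1) = m by omega] at this
    exact this
  have hlt' : k2 - k1 < r := by omega
  exact Nat.find_min hex hlt' hP'

end S12

/-- The fixed point `x = f^ω(0)` of `f : 0 ↦ 012, 1 ↦ 112002, 2 ↦ ε` is
not ultimately periodic. -/
theorem stmt_12 (x : ℕ → Fin 3) (hx : IsFixedPointWord fEx 0 x) :
    ¬ UltPeriodic x := S12.main hx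
end

section
/- For the morphism f : 0 ↦ 012, 1 ↦ 112002, 2 ↦ ε with fixed point 𝐱 = f^ω(0), an index n ≥ 1 belongs to the cutting set CS_{f,0} = {|f(pref_m(𝐱))| : m ≥ 0} if and only if n ≥ 3, x_{n−1} = 2, and x_{n−3} ≠ 1; and 0 ∈ CS_{f,0}. -/
open scoped BigOperators

namespace Stmt13Aux

/-- cutting lengths -/
def c (x : ℕ → Fin 3) (m : ℕ) : ℕ := (mapWord fEx (wordTake x m)).length

lemma mapWord_append (f : Fin 3 → List (Fin 3)) (u v : List (Fin 3)) :
    mapWord f (u ++ v) = mapWord f u ++ mapWord f v := by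
  simp [mapWord]

lemma wordTake_succ (x : ℕ → Fin 3) (m : ℕ) :
    wordTake x (m+1) = wordTake x m ++ [x m] := by
  simp [wordTake, List.range_succ]

lemma c_succ (x : ℕ → Fin 3) (m : ℕ) :
    c x (m+1) = c x m + (fEx (x m)).length := by
  simp [c, wordTake_succ, mapWord_append, mapWord]

lemma c_zero (x : ℕ → Fin 3) : c x 0 = 0 := by
  simp [c, wordTake, mapWord]

lemma c_mono (x : ℕ → Fin 3) : Monotone (c x) := by
  apply monotone_nat_of_le_succ
  intro m; rw [c_succ]; omega

lemma wordTake_take (x : ℕ → Fin 3) {k n : ℕ} (h : k ≤ n) :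
    (wordTake x n).take k = wordTake x k := by
  simp [wordTake, List.take_range, ← List.map_take, Nat.min_eq_left h]

lemma prefix_wordTake (x : ℕ → Fin 3) {u : List (Fin 3)} {n : ℕ}
    (hu : u <+: wordTake x n) : wordTake x u.length = u := by
  have hl : u.length ≤ n := by
    have := hu.length_le
    simpa [wordTake] using this
  obtain ⟨t, ht⟩ := hu
  rw [← wordTake_take x hl, ← ht, List.take_left]

lemma wordTake_eq_getD {x : ℕ → Fin 3} {N : ℕ} {w : List (Fin 3)}
    (h : wordTake x N = w) {i : ℕ} (hi : i < N) : x i = w.getD i 0 := by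
  subst h
  have hlen : i < ((List.range N).map x).length := by simpa using hi
  rw [wordTake, List.getD_eq_getElem _ _ hlen]
  simp

def L (n : ℕ) : ℕ := (iterWord fEx n [0]).length

lemma iterWord_succ' (f : Fin 3 → List (Fin 3)) (n : ℕ) (w : List (Fin 3)) :
    iterWord f (n+1) w = iterWord f n (mapWord f w) := by
  induction n generalizing w with
  | zero => rfl
  | succ k ih =>
    show mapWord f (iterWord f (k+1) w) = _
    rw [ih]
    rfl

lemma iterWord_append (f : Fin 3 → List (Fin 3)) (n : ℕ) (u v : List (Fin 3)) :
    iterWord f n (u ++ v) = iterWord f n u ++ iterWord f n v := by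
  induction n with
  | zero => rfl
  | succ k ih =>
    show mapWord f _ = mapWord f _ ++ mapWord f _
    rw [ih, mapWord_append]

lemma one_mem_mapWord {w : List (Fin 3)} (h : (1 : Fin 3) ∈ w) :
    (1 : Fin 3) ∈ mapWord fEx w := by
  rw [mapWord, List.mem_flatMap]
  exact ⟨1, h, by decide⟩

lemma one_mem_iter (n : ℕ) : (1 : Fin 3) ∈ iterWord fEx n [1] := by
  induction n with
  | zero => simp [iterWord]
  | succ k ih => exact one_mem_mapWord ih

lemma L_lt (n : ℕ) : L n < L (n+1) := by
  have hsplit : iterWord fEx (n+1) [0]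
      = iterWord fEx n [0] ++ iterWord fEx n [1] ++ iterWord fEx n [2] := by
    rw [iterWord_succ']
    have : mapWord fEx [0] = ([0] ++ [1] ++ [2] : List (Fin 3)) := by decide
    rw [this, iterWord_append, iterWord_append]
  have h1 : 0 < (iterWord fEx n [1]).length :=
    List.length_pos_of_mem (one_mem_iter n)
  unfold L
  rw [hsplit]
  simp
  omega

lemma L_ge (n : ℕ) : n + 1 ≤ L n := by
  induction n with
  | zero => simp [L, iterWord]
  | succ k ih => have := L_lt k; omega

section Fixed

variable {x : ℕ → Fin 3} (hx : IsFixedPointWord fEx 0 x)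

include hx

lemma cut_prefix (m : ℕ) :
    wordTake x (c x m) = mapWord fEx (wordTake x m) := by
  have hm : m ≤ (iterWord fEx m [0]).length := by have := L_ge m; unfold L at this; omega
  have h1 : wordTake x m = (iterWord fEx m [0]).take m := by
    rw [← wordTake_take x hm, hx m]
  have h2 : mapWord fEx (wordTake x m) <+: iterWord fEx (m+1) [0] := by
    rw [h1]
    have : iterWord fEx m [0]
        = (iterWord fEx m [0]).take m ++ (iterWord fEx m [0]).drop m :=
      (List.take_append_drop _ _).symm
    refine ⟨mapWord fEx ((iterWord fEx m [0]).drop m), ?_⟩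
    show _ ++ _ = mapWord fEx (iterWord fEx m [0])
    rw [← mapWord_append, List.take_append_drop]
  have h3 : mapWord fEx (wordTake x m) <+: wordTake x (iterWord fEx (m+1) [0]).length := by
    rw [hx (m+1)]; exact h2
  exact prefix_wordTake x h3

lemma block (m j : ℕ) (hj : j < (fEx (x m)).length) :
    x (c x m + j) = (fEx (x m)).getD j 0 := by
  have hp := cut_prefix hx (m+1)
  rw [wordTake_succ, mapWord_append] at hp
  have hi : c x m + j < c x (m+1) := by rw [c_succ]; omega
  have hg := wordTake_eq_getD hp hi
  rw [hg]
  have hlen : (mapWord fEx (wordTake x m)).length = c x m := rfl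
  rw [List.getD_append_right _ _ _ _ (show (mapWord fEx (wordTake x m)).length ≤ c x m + j by rw [hlen]; omega), hlen]
  have : c x m + j - c x m = j := by omega
  rw [this]
  congr 1
  simp [mapWord]

lemma c_unbounded (p : ℕ) : ∃ k, p < c x k := by
  refine ⟨L p, ?_⟩
  have : c x (L p) = L (p + 1) := by
    unfold c L
    rw [hx p]
    rfl
  rw [this]
  have h1 := L_ge (p+1)
  omega

lemma exists_block (p : ℕ) : ∃ m, c x m ≤ p ∧ p < c x (m+1) := by
  have hex : ∃ k, p < c x k := c_unbounded hx p
  classical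
  let n := Nat.find hex
  have hn : p < c x n := Nat.find_spec hex
  have hn0 : n ≠ 0 := by
    intro h
    rw [h, c_zero] at hn
    omega
  refine ⟨n - 1, ?_, ?_⟩
  · by_contra hc
    push_neg at hc
    exact Nat.find_min hex (show n - 1 < n by omega) hc
  · have : n - 1 + 1 = n := by omega
    rw [this]; exact hn

omit hx in
lemma fin3_cases (a : Fin 3) : a = 0 ∨ a = 1 ∨ a = 2 := by
  fin_cases a <;> simp

lemma forward (m : ℕ) :
    c x m = 0 ∨ (3 ≤ c x m ∧ x (c x m - 1) = 2 ∧ x (c x m - 3) ≠ 1) := by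
  induction m with
  | zero => left; exact c_zero x
  | succ k ih =>
    rcases fin3_cases (x k) with h | h | h
    · right
      have hc : c x (k+1) = c x k + 3 := by rw [c_succ, h]; rfl
      have b0 := block hx k 0 (by rw [h]; decide)
      have b2 := block hx k 2 (by rw [h]; decide)
      rw [h] at b0 b2
      refine ⟨by omega, ?_, ?_⟩
      · have : c x (k+1) - 1 = c x k + 2 := by omega
        rw [this]; simpa [fEx] using b2
      · have : c x (k+1) - 3 = c x k := by omega
        rw [this]
        have : x (c x k) = 0 := by simpa [fEx] using b0
        rw [this]; decide
    · right
      have hc : c x (k+1) = c x k + 6 := by rw [c_succ, h]; rfl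
      have b3 := block hx k 3 (by rw [h]; decide)
      have b5 := block hx k 5 (by rw [h]; decide)
      rw [h] at b3 b5
      refine ⟨by omega, ?_, ?_⟩
      · have : c x (k+1) - 1 = c x k + 5 := by omega
        rw [this]; simpa [fEx] using b5
      · have : c x (k+1) - 3 = c x k + 3 := by omega
        rw [this]
        have : x (c x k + 3) = 0 := by simpa [fEx] using b3
        rw [this]; decide
    · have hc : c x (k+1) = c x k := by rw [c_succ, h]; rfl
      rw [hc]; exact ih

lemma backward {n : ℕ} (h3 : 3 ≤ n) (h1 : x (n-1) = 2) (h2 : x (n-3) ≠ 1) :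
    ∃ m, n = c x m := by
  obtain ⟨m, hm1, hm2⟩ := exists_block hx (n-1)
  rcases fin3_cases (x m) with h | h | h
  · have hc : c x (m+1) = c x m + 3 := by rw [c_succ, h]; rfl
    set j := n - 1 - c x m with hj
    have hjlt : j < 3 := by omega
    have hb := block hx m j (by rw [h]; exact (by simpa [fEx] using hjlt))
    rw [h] at hb
    have hn1 : n - 1 = c x m + j := by omega
    rw [hn1, hb] at h1
    interval_cases j
    · exact absurd h1 (by decide)
    · exact absurd h1 (by decide)
    · exact ⟨m+1, by omega⟩
  · have hc : c x (m+1) = c x m + 6 := by rw [c_succ, h]; rfl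
    set j := n - 1 - c x m with hj
    have hjlt : j < 6 := by omega
    have hb := block hx m j (by rw [h]; exact (by simpa [fEx] using hjlt))
    rw [h] at hb
    have hn1 : n - 1 = c x m + j := by omega
    rw [hn1, hb] at h1
    interval_cases j
    · exact absurd h1 (by decide)
    · exact absurd h1 (by decide)
    · -- j = 2 : contradiction with h2
      exfalso
      have hb0 := block hx m 0 (by rw [h]; decide)
      rw [h] at hb0
      have hx0 : x (c x m) = 1 := by simpa [fEx] using hb0
      have : n - 3 = c x m := by omega
      rw [this, hx0] at h2
      exact h2 rfl
    · exact absurd h1 (by decide)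
    · exact absurd h1 (by decide)
    · exact ⟨m+1, by omega⟩
  · have hc : c x (m+1) = c x m := by rw [c_succ, h]; rfl
    omega

end Fixed

end Stmt13Aux

/-- For `f : 0 ↦ 012, 1 ↦ 112002, 2 ↦ ε` with fixed point `x = f^ω(0)`,
the index `0` is in the cutting set, and an index `n ≥ 1` belongs to the cutting set
`CS_{f,0} = {|f(pref_m(x))| : m ≥ 0}` iff `n ≥ 3`, `x_{n−1} = 2` and `x_{n−3} ≠ 1`. -/
theorem stmt_13 (x : ℕ → Fin 3) (hx : IsFixedPointWord fEx 0 x) :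
    0 ∈ cutSet fEx x ∧
    ∀ n : ℕ, 1 ≤ n →
      (n ∈ cutSet fEx x ↔ 3 ≤ n ∧ x (n - 1) = 2 ∧ x (n - 3) ≠ 1) := by
  constructor
  · exact ⟨0, rfl⟩
  · intro n hn
    constructor
    · rintro ⟨m, rfl⟩
      have hc : (mapWord fEx (wordTake x m)).length = Stmt13Aux.c x m := rfl
      rw [hc] at hn ⊢
      rcases Stmt13Aux.forward hx m with h | h
      · omega
      · exact h
    · rintro ⟨h3, h1, h2⟩
      obtain ⟨m, hm⟩ := Stmt13Aux.backward hx h3 h1 h2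
      exact ⟨m, hm⟩
end

section
/- The abelian complexity function of the fixed point 𝐱 = f^ω(0) of the morphism f : 0 ↦ 012, 1 ↦ 112002, 2 ↦ ε satisfies: ρ^{ab}_𝐱(0) = 1, ρ^{ab}_𝐱(1) = 3, ρ^{ab}_𝐱(2) = 5, and ρ^{ab}_𝐱(3) = 3. -/
open scoped BigOperators

/-- The abelian complexity function: the number of distinct Parikh vectors of length-`n`
factors of `x`. -/
noncomputable def abComp (x : ℕ → Fin 3) (n : ℕ) : ℕ :=
  Set.ncard {ψ : Fin 3 → ℕ |
    ∃ i, ψ = fun b => ((List.range n).map fun j => x (i + j)).count b}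


section Aux

lemma fin3_cases (a : Fin 3) : a = 0 ∨ a = 1 ∨ a = 2 := by omega

/-- Every position `j` of `w` carries the letter `2` iff `j ≡ 2 (mod 3)`. -/
def Good3 (w : List (Fin 3)) : Prop := ∀ j : Fin w.length, (w.get j = 2 ↔ (j : ℕ) % 3 = 2)

instance : DecidablePred Good3 := fun w => by unfold Good3; infer_instance

lemma good3_append {u v : List (Fin 3)} (hu : u.length % 3 = 0) (h1 : Good3 u)
    (h2 : Good3 v) : Good3 (u ++ v) := by
  intro j
  have hj := j.isLt
  simp only [List.length_append] at hj
  rcases lt_or_ge (j : ℕ) u.length with h | h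
  · have := h1 ⟨j, h⟩
    simpa [List.get_eq_getElem, List.getElem_append_left h] using this
  · have hv : (j : ℕ) - u.length < v.length := by omega
    have := h2 ⟨(j : ℕ) - u.length, hv⟩
    simp only [List.get_eq_getElem] at this ⊢
    rw [List.getElem_append_right h, this]
    omega

lemma good3_flatMap (u : List (Fin 3)) : Good3 (u.flatMap fEx) := by
  induction u with
  | nil => intro j; exact absurd j.isLt (by simp)
  | cons a t ih =>
    rw [List.flatMap_cons]
    rcases fin3_cases a with rfl | rfl | rfl <;>
      exact good3_append (by decide) (by decide) ih

lemma flatMap_facts (u : List (Fin 3)) :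
    (u.flatMap fEx).length = 3 * u.count 0 + 6 * u.count 1 ∧
    (u.flatMap fEx).count 0 + (u.flatMap fEx).count 1 = 2 * (u.count 0 + 2 * u.count 1) := by
  induction u with
  | nil => simp
  | cons a t ih =>
    rw [List.flatMap_cons]
    rcases fin3_cases a with rfl | rfl | rfl <;>
      simp_all [List.count_cons, List.count_append, fEx] <;> omega

lemma sum_ge (m : ℕ) :
    2 ^ m ≤ (iterWord fEx m [0]).count 0 + (iterWord fEx m [0]).count 1 := by
  induction m with
  | zero => simp [iterWord]
  | succ m ih =>
    have h := (flatMap_facts (iterWord fEx m [0])).2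
    show 2 ^ (m+1) ≤ (mapWord fEx _).count 0 + (mapWord fEx _).count 1
    unfold mapWord
    rw [h, pow_succ]
    omega

lemma len_ge (j : ℕ) : j < (iterWord fEx (j+1) [0]).length := by
  have h := (flatMap_facts (iterWord fEx j [0])).1
  have h2 := sum_ge j
  have h3 : j < 2 ^ j := Nat.lt_two_pow_self
  show j < (mapWord fEx _).length
  unfold mapWord
  rw [h]
  omega

lemma x_eq_get {x : ℕ → Fin 3} {w : List (Fin 3)} (h : wordTake x w.length = w)
    {j : ℕ} (hj : j < w.length) : x j = w[j] := by
  have h1 : (wordTake x w.length)[j]'(by simp [wordTake]; exact hj) = w[j] :=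
    List.getElem_of_eq h _
  simpa [wordTake] using h1

lemma key_two {x : ℕ → Fin 3} (hx : IsFixedPointWord fEx 0 x) (j : ℕ) :
    x j = 2 ↔ j % 3 = 2 := by
  have hj := len_ge j
  have hxj := x_eq_get (hx (j+1)) hj
  have hg := good3_flatMap (iterWord fEx j [0]) ⟨j, hj⟩
  rw [List.get_eq_getElem] at hg
  rw [hxj]
  exact hg

lemma xvals {x : ℕ → Fin 3} (hx : IsFixedPointWord fEx 0 x) :
    x 0 = 0 ∧ x 1 = 1 ∧ x 2 = 2 ∧ x 3 = 1 ∧ x 4 = 1 ∧ x 5 = 2 ∧ x 6 = 0 ∧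
      x 7 = 0 ∧ x 8 = 2 := by
  have hw : iterWord fEx 2 [0] = [0,1,2,1,1,2,0,0,2] := by decide
  have h := hx 2
  rw [hw] at h
  refine ⟨?_, ?_, ?_, ?_, ?_, ?_, ?_, ?_, ?_⟩ <;> exact x_eq_get h (by simp)

def F1ab : Finset (Fin 3 → ℕ) := {![1,0,0], ![0,1,0], ![0,0,1]}
def F2ab : Finset (Fin 3 → ℕ) := {![2,0,0], ![1,1,0], ![1,0,1], ![0,2,0], ![0,1,1]}
def F3ab : Finset (Fin 3 → ℕ) := {![2,0,1], ![1,1,1], ![0,2,1]}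

lemma vec1_mem : ∀ a : Fin 3, (fun d => [a].count d) ∈ F1ab := by decide
lemma vec2_mem : ∀ a b : Fin 3, ¬(a = 2 ∧ b = 2) → (fun d => [a,b].count d) ∈ F2ab := by
  decide
lemma vec3_mem : ∀ a b c : Fin 3,
    ((a = 2 ∧ b ≠ 2 ∧ c ≠ 2) ∨ (a ≠ 2 ∧ b = 2 ∧ c ≠ 2) ∨ (a ≠ 2 ∧ b ≠ 2 ∧ c = 2)) →
    (fun d => [a,b,c].count d) ∈ F3ab := by decide

end Aux

/-- The abelian complexity of the fixed point `x = f^ω(0)` of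
`f : 0 ↦ 012, 1 ↦ 112002, 2 ↦ ε` satisfies `ρ(0)=1, ρ(1)=3, ρ(2)=5, ρ(3)=3`. -/
theorem stmt_18 (x : ℕ → Fin 3) (hx : IsFixedPointWord fEx 0 x) :
    abComp x 0 = 1 ∧ abComp x 1 = 3 ∧ abComp x 2 = 5 ∧ abComp x 3 = 3 := by
  obtain ⟨h0, h1, h2, h3, h4, h5, h6, h7, h8⟩ := xvals hx
  have key := key_two hx
  refine ⟨?_, ?_, ?_, ?_⟩
  · unfold abComp
    have hS : {ψ : Fin 3 → ℕ |
        ∃ i, ψ = fun b => ((List.range 0).map fun j => x (i + j)).count b}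
        = {fun _ => 0} := by
      ext ψ
      simp
    rw [hS, Set.ncard_singleton]
  · unfold abComp
    have hS : {ψ : Fin 3 → ℕ |
        ∃ i, ψ = fun b => ((List.range 1).map fun j => x (i + j)).count b}
        = ↑F1ab := by
      ext ψ
      constructor
      · rintro ⟨i, rfl⟩
        exact vec1_mem (x i)
      · intro hψ
        rcases (by simpa [F1ab] using hψ : ψ = ![1,0,0] ∨ ψ = ![0,1,0] ∨ ψ = ![0,0,1])
          with rfl | rfl | rfl
        · exact ⟨0, by show _ = fun b => [x 0].count b; rw [h0]; decide⟩
        · exact ⟨1, by show _ = fun b => [x 1].count b; rw [h1]; decide⟩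
        · exact ⟨2, by show _ = fun b => [x 2].count b; rw [h2]; decide⟩
    rw [hS, Set.ncard_coe_finset]
    decide
  · unfold abComp
    have hS : {ψ : Fin 3 → ℕ |
        ∃ i, ψ = fun b => ((List.range 2).map fun j => x (i + j)).count b}
        = ↑F2ab := by
      ext ψ
      constructor
      · rintro ⟨i, rfl⟩
        refine vec2_mem (x i) (x (i+1)) ?_
        rintro ⟨ha, hb⟩
        have := (key i).1 ha
        have := (key (i+1)).1 hb
        omega
      · intro hψ
        rcases (by simpa [F2ab] using hψ :
            ψ = ![2,0,0] ∨ ψ = ![1,1,0] ∨ ψ = ![1,0,1] ∨ ψ = ![0,2,0] ∨ ψ = ![0,1,1])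
          with rfl | rfl | rfl | rfl | rfl
        · exact ⟨6, by show _ = fun b => [x 6, x 7].count b; rw [h6, h7]; decide⟩
        · exact ⟨0, by show _ = fun b => [x 0, x 1].count b; rw [h0, h1]; decide⟩
        · exact ⟨5, by show _ = fun b => [x 5, x 6].count b; rw [h5, h6]; decide⟩
        · exact ⟨3, by show _ = fun b => [x 3, x 4].count b; rw [h3, h4]; decide⟩
        · exact ⟨1, by show _ = fun b => [x 1, x 2].count b; rw [h1, h2]; decide⟩
    rw [hS, Set.ncard_coe_finset]
    decide
  · unfold abComp
    have hS : {ψ : Fin 3 → ℕ |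
        ∃ i, ψ = fun b => ((List.range 3).map fun j => x (i + j)).count b}
        = ↑F3ab := by
      ext ψ
      constructor
      · rintro ⟨i, rfl⟩
        refine vec3_mem (x i) (x (i+1)) (x (i+2)) ?_
        have k0 := key i
        have k1 := key (i+1)
        have k2 := key (i+2)
        have hmod : i % 3 = 0 ∨ i % 3 = 1 ∨ i % 3 = 2 := by omega
        rcases hmod with h | h | h
        · exact Or.inr (Or.inr ⟨fun hc => by have := k0.1 hc; omega,
            fun hc => by have := k1.1 hc; omega, k2.2 (by omega)⟩)
        · exact Or.inr (Or.inl ⟨fun hc => by have := k0.1 hc; omega,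
            k1.2 (by omega), fun hc => by have := k2.1 hc; omega⟩)
        · exact Or.inl ⟨k0.2 (by omega), fun hc => by have := k1.1 hc; omega,
            fun hc => by have := k2.1 hc; omega⟩
      · intro hψ
        rcases (by simpa [F3ab] using hψ :
            ψ = ![2,0,1] ∨ ψ = ![1,1,1] ∨ ψ = ![0,2,1])
          with rfl | rfl | rfl
        · exact ⟨6, by show _ = fun b => [x 6, x 7, x 8].count b; rw [h6, h7, h8]; decide⟩
        · exact ⟨0, by show _ = fun b => [x 0, x 1, x 2].count b; rw [h0, h1, h2]; decide⟩
        · exact ⟨3, by show _ = fun b => [x 3, x 4, x 5].count b; rw [h3, h4, h5]; decide⟩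
    rw [hS, Set.ncard_coe_finset]
    decide
end
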